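/- arXiv:2204.12814 — 4 statements merged into one kernel-verified Lean document; each statement's English description precedes it below -/
import Mathlib

section
/- In a finite MDP, for every strategy σ and initial distribution d0, the probability mass in the union E of all (maximal) end-components tends to 1: liminf as i → ∞ of M^σ_i(E) equals 1. -/
open scoped BigOperators
open Classical Filter

/-- A finite Markov decision process with real transition probabilities. -/
structure MDP (Q A : Type) [Fintype Q] [Fintype A] where
  δ : Q → A → Q → ℝ
  δ_nonneg : ∀ q a q', 0 ≤ δ q a q'
  δ_sum : ∀ q a, ∑ q', δ q a q' = 1

namespace MDP

variable {Q A : Type} [Fintype Q] [Fintype A]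

/-- `d` is a probability distribution. -/
def IsDist (d : Q → ℝ) : Prop := (∀ q, 0 ≤ d q) ∧ ∑ q, d q = 1

/-- A (randomized, history-dependent) strategy maps a history (list of past
state-action pairs) and the current state to a distribution over actions. -/
def IsStrategy (σ : List (Q × A) → Q → A → ℝ) : Prop :=
  (∀ h q a, 0 ≤ σ h q a) ∧ ∀ h q, ∑ a, σ h q a = 1

/-- The probability of the finite path `qs` (with actions `as`) of length `i`,
under strategy `σ` from initial distribution `d0`. -/
noncomputable def pathProb (M : MDP Q A) (σ : List (Q × A) → Q → A → ℝ)
    (d0 : Q → ℝ) (i : ℕ) (qs : Fin (i + 1) → Q) (as : Fin i → A) : ℝ :=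
  d0 (qs 0) * ∏ j : Fin i,
    (σ (List.ofFn (fun k : Fin j.val =>
          (qs ⟨k.val, by have := k.isLt; have := j.isLt; omega⟩,
           as ⟨k.val, by have := k.isLt; have := j.isLt; omega⟩)))
        (qs j.castSucc) (as j))
      * M.δ (qs j.castSucc) (as j) (qs j.succ)

/-- The distribution over states after `i` steps (`M^σ_i`). -/
noncomputable def stepDist (M : MDP Q A) (σ : List (Q × A) → Q → A → ℝ)
    (d0 : Q → ℝ) (i : ℕ) (q : Q) : ℝ :=
  ∑ qs : Fin (i + 1) → Q, ∑ as : Fin i → A,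
    if qs (Fin.last i) = q then M.pathProb σ d0 i qs as else 0

/-- The probability mass that a (sub)distribution assigns to a set `T`. -/
noncomputable def mass (d : Q → ℝ) (T : Set Q) : ℝ := ∑ q, T.indicator d q

/-- The support of a (sub)distribution. -/
def supp {α : Type} (d : α → ℝ) : Set α := {q | 0 < d q}

/-- One-step sure predecessors of `Y`. -/
def Pre (M : MDP Q A) (Y : Set Q) : Set Q :=
  {q | ∃ a, ∀ q', 0 < M.δ q a q' → q' ∈ Y}

/-- Probability of reaching `T` within `i` steps. -/
noncomputable def reachProb (M : MDP Q A) (σ : List (Q × A) → Q → A → ℝ)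
    (d0 : Q → ℝ) (T : Set Q) (i : ℕ) : ℝ :=
  ∑ qs : Fin (i + 1) → Q, ∑ as : Fin i → A,
    if ∃ j, qs j ∈ T then M.pathProb σ d0 i qs as else 0

/-- `d0` is almost-sure winning for the reachability objective `◇T`:
some strategy reaches `T` with probability one. -/
def ASReach (M : MDP Q A) (d0 : Q → ℝ) (T : Set Q) : Prop :=
  ∃ σ, IsStrategy σ ∧ (⨆ i : ℕ, M.reachProb σ d0 T i) = 1

/-- `d0` is limit-sure eventually synchronizing in `T`. -/
def LimitSureEventually (M : MDP Q A) (d0 : Q → ℝ) (T : Set Q) : Prop :=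
  ∀ ε > (0 : ℝ), ∃ σ, IsStrategy σ ∧ ∃ i, 1 - ε ≤ mass (M.stepDist σ d0 i) T

/-- `d0` is almost-sure weakly synchronizing in `T`. -/
def ASWeakly (M : MDP Q A) (d0 : Q → ℝ) (T : Set Q) : Prop :=
  ∃ σ, IsStrategy σ ∧ ∀ ε > (0 : ℝ), {i : ℕ | 1 - ε ≤ mass (M.stepDist σ d0 i) T}.Infinite

/-- `d0` is almost-sure strongly synchronizing in `T`. -/
def ASStrongly (M : MDP Q A) (d0 : Q → ℝ) (T : Set Q) : Prop :=
  ∃ σ, IsStrategy σ ∧ ∀ ε > (0 : ℝ), ∃ N, ∀ i ≥ N, 1 - ε ≤ mass (M.stepDist σ d0 i) T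

/-- The uniform distribution on a set `S`. -/
noncomputable def uniformOn (S : Set Q) : Q → ℝ :=
  fun q => if q ∈ S then 1 / (S.ncard : ℝ) else 0

/-- The uniform strategy, playing all actions uniformly at random. -/
noncomputable def uniformStrategy (Q A : Type) [Fintype A] :
    List (Q × A) → Q → A → ℝ :=
  fun _ _ _ => 1 / (Fintype.card A : ℝ)

/-- Action `a` is allowed in `q` w.r.t. `S` if all its successors stay in `S`. -/
def Allowed (M : MDP Q A) (S : Set Q) (q : Q) (a : A) : Prop :=
  ∀ q', 0 < M.δ q a q' → q' ∈ S

/-- Edge relation within `S` given the allowed actions. -/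
def ECEdge (M : MDP Q A) (S : Set Q) (q q' : Q) : Prop :=
  q ∈ S ∧ q' ∈ S ∧ ∃ a, M.Allowed S q a ∧ 0 < M.δ q a q'

/-- `S` is an end-component: closed and strongly connected via allowed actions. -/
def IsEC (M : MDP Q A) (S : Set Q) : Prop :=
  (∀ q ∈ S, ∃ a, M.Allowed S q a) ∧
  ∀ q ∈ S, ∀ q' ∈ S, Relation.ReflTransGen (M.ECEdge S) q q'

/-- The union of all end-components. -/
def ECUnion (M : MDP Q A) : Set Q := ⋃₀ {S | M.IsEC S}

/-- Positive always synchronizing in `T`. -/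
def PosAlways (M : MDP Q A) (d0 : Q → ℝ) (T : Set Q) : Prop :=
  ∃ σ, IsStrategy σ ∧ ∀ i, 0 < mass (M.stepDist σ d0 i) T

/-- Positive eventually synchronizing in `T`. -/
def PosEvent (M : MDP Q A) (d0 : Q → ℝ) (T : Set Q) : Prop :=
  ∃ σ, IsStrategy σ ∧ ∃ i, 0 < mass (M.stepDist σ d0 i) T

/-- Positive weakly synchronizing in `T`. -/
def PosWeakly (M : MDP Q A) (d0 : Q → ℝ) (T : Set Q) : Prop :=
  ∃ σ, IsStrategy σ ∧ ∀ N, ∃ i ≥ N, 0 < mass (M.stepDist σ d0 i) T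

/-- Positive strongly synchronizing in `T`. -/
def PosStrongly (M : MDP Q A) (d0 : Q → ℝ) (T : Set Q) : Prop :=
  ∃ σ, IsStrategy σ ∧ ∃ N, ∀ i ≥ N, 0 < mass (M.stepDist σ d0 i) T

/-- Bounded always synchronizing in `T`. -/
def BndAlways (M : MDP Q A) (d0 : Q → ℝ) (T : Set Q) : Prop :=
  ∃ σ, IsStrategy σ ∧ ∃ ε > (0 : ℝ), ∀ i, ε < mass (M.stepDist σ d0 i) T

/-- Bounded eventually synchronizing in `T`. -/
def BndEvent (M : MDP Q A) (d0 : Q → ℝ) (T : Set Q) : Prop :=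
  ∃ σ, IsStrategy σ ∧ ∃ ε > (0 : ℝ), ∃ i, ε < mass (M.stepDist σ d0 i) T

/-- Bounded weakly synchronizing in `T`. -/
def BndWeakly (M : MDP Q A) (d0 : Q → ℝ) (T : Set Q) : Prop :=
  ∃ σ, IsStrategy σ ∧ ∃ ε > (0 : ℝ), ∀ N, ∃ i ≥ N, ε < mass (M.stepDist σ d0 i) T

/-- Bounded strongly synchronizing in `T`. -/
def BndStrongly (M : MDP Q A) (d0 : Q → ℝ) (T : Set Q) : Prop :=
  ∃ σ, IsStrategy σ ∧ ∃ ε > (0 : ℝ), ∃ N, ∀ i ≥ N, ε < mass (M.stepDist σ d0 i) T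

end MDP

/-!
For a state `x` outside every end-component, let `v_x q` be the maximal probability of reaching
`x` from `q`, computed by value iteration. Every action played in `x` returns to `x` with
probability at most some `β_x < 1`: otherwise the states reachable from `x` through actions that
keep value one would form an end-component containing `x`. Hence `f = ∑_{x ∉ E} v_x / (1 - β_x)`
is a nonnegative potential whose expectation drops, under any strategy, at least by the
probability of being outside `E` at each step. Telescoping makes these probabilities summable,
so they tend to `0`.
-/

open scoped Topology
open Relation

theorem Fin.sum_univ_fun_snoc {α β : Type*} [Fintype α] [AddCommMonoid β] (n : ℕ)
    (F : (Fin (n + 1) → α) → β) : ∑ f, F f = ∑ f : Fin n → α, ∑ x, F (Fin.snoc f x) := by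
  rw [← (Fin.snocEquiv fun _ => α).sum_comp, Fintype.sum_prod_type, Finset.sum_comm]
  rfl

theorem Finite.exists_lt_forall_le_of_lt {ι : Type*} [Finite ι] (f : ι → ℝ) (c : ℝ) :
    ∃ β < c, ∀ i, f i < c → f i ≤ β := by
  rcases isEmpty_or_nonempty ι with _ | _
  · exact ⟨c - 1, by linarith, fun i => isEmptyElim i⟩
  obtain ⟨i₀, hi₀⟩ := Finite.exists_max fun i => if f i < c then f i else c - 1
  refine ⟨if f i₀ < c then f i₀ else c - 1, by split_ifs <;> linarith, fun i hi => ?_⟩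
  simpa [hi] using hi₀ i

namespace MDP

variable {Q A : Type} [Fintype Q] [Fintype A]

section Paths

def history {i : ℕ} (qs : Fin (i + 1) → Q) (as : Fin i → A) : List (Q × A) :=
  List.ofFn fun k : Fin i => (qs k.castSucc, as k)

variable (M : MDP Q A) (σ : List (Q × A) → Q → A → ℝ) (d0 : Q → ℝ)

theorem pathProb_snoc (i : ℕ) (qs : Fin (i + 1) → Q) (as : Fin i → A) (q : Q) (a : A) :
    M.pathProb σ d0 (i + 1) (Fin.snoc qs q) (Fin.snoc as a) =
      M.pathProb σ d0 i qs as *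
        (σ (history qs as) (qs (Fin.last i)) a * M.δ (qs (Fin.last i)) a q) := by
  simp only [pathProb, Fin.prod_univ_castSucc, history, mul_assoc]
  rw [Fin.snoc_apply_zero]
  congr 2
  · refine Finset.prod_congr rfl fun j _ => ?_
    have hk : ∀ k : Fin j, (k : ℕ) < i := fun k => k.isLt.trans j.isLt
    simp [Fin.snoc, Fin.castLT, hk, (hk _).le, Fin.castSucc, Fin.castAdd, Fin.castLE, Fin.succ]
  · simp [Fin.snoc, Fin.castLT, Fin.castSucc, Fin.castAdd, Fin.castLE, Fin.last]

theorem pathProb_nonneg (hσ : IsStrategy σ) (hd0 : ∀ q, 0 ≤ d0 q) (i : ℕ)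
    (qs : Fin (i + 1) → Q) (as : Fin i → A) : 0 ≤ M.pathProb σ d0 i qs as :=
  mul_nonneg (hd0 _) <| Finset.prod_nonneg fun _ _ => mul_nonneg (hσ.1 ..) (M.δ_nonneg ..)

noncomputable def expectAt (i : ℕ) (g : Q → ℝ) : ℝ :=
  ∑ qs : Fin (i + 1) → Q, ∑ as : Fin i → A, M.pathProb σ d0 i qs as * g (qs (Fin.last i))

theorem mass_stepDist (T : Set Q) (i : ℕ) :
    mass (M.stepDist σ d0 i) T = M.expectAt σ d0 i (T.indicator 1) := by
  unfold mass stepDist expectAt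
  simp only [Set.indicator_apply, Pi.one_apply, mul_ite, mul_one, mul_zero]
  rw [← Finset.sum_filter, Finset.sum_comm]
  refine Finset.sum_congr rfl fun qs _ => ?_
  rw [Finset.sum_comm]
  simp [Finset.sum_ite_eq]

theorem expectAt_sub (i : ℕ) (f g : Q → ℝ) :
    M.expectAt σ d0 i (f - g) = M.expectAt σ d0 i f - M.expectAt σ d0 i g := by
  simp only [expectAt, Pi.sub_apply, mul_sub, Finset.sum_sub_distrib]

theorem expectAt_nonneg (hσ : IsStrategy σ) (hd0 : ∀ q, 0 ≤ d0 q) (i : ℕ) {g : Q → ℝ}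
    (hg : 0 ≤ g) : 0 ≤ M.expectAt σ d0 i g :=
  Finset.sum_nonneg fun _ _ => Finset.sum_nonneg fun _ _ =>
    mul_nonneg (M.pathProb_nonneg σ d0 hσ hd0 ..) (hg _)

theorem expectAt_succ (i : ℕ) (g : Q → ℝ) :
    M.expectAt σ d0 (i + 1) g = ∑ qs : Fin (i + 1) → Q, ∑ as : Fin i → A,
      M.pathProb σ d0 i qs as * ∑ a, σ (history qs as) (qs (Fin.last i)) a *
        ∑ q, M.δ (qs (Fin.last i)) a q * g q := by
  rw [expectAt, Fin.sum_univ_fun_snoc]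
  refine Finset.sum_congr rfl fun qs _ => ?_
  simp only [Fin.sum_univ_fun_snoc (α := A), pathProb_snoc, Fin.snoc_last, Finset.mul_sum,
    mul_assoc]
  rw [Finset.sum_comm]
  refine Finset.sum_congr rfl fun as _ => ?_
  rw [Finset.sum_comm]

end Paths

def expectNext (M : MDP Q A) (q : Q) (a : A) (v : Q → ℝ) : ℝ := ∑ q', M.δ q a q' * v q'

section ExpectNext

variable (M : MDP Q A) {q : Q} {a : A} {v w : Q → ℝ} {c : ℝ}

theorem expectNext_le (h : ∀ q', 0 < M.δ q a q' → v q' ≤ c) : M.expectNext q a v ≤ c :=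
  calc M.expectNext q a v ≤ ∑ q', M.δ q a q' * c := Finset.sum_le_sum fun q' _ => by
        rcases (M.δ_nonneg q a q').eq_or_lt with h0 | hpos
        · simp [← h0]
        · exact mul_le_mul_of_nonneg_left (h q' hpos) hpos.le
    _ = c := by rw [← Finset.sum_mul, M.δ_sum, one_mul]

theorem expectNext_nonneg (h : 0 ≤ v) : 0 ≤ M.expectNext q a v :=
  Finset.sum_nonneg fun q' _ => mul_nonneg (M.δ_nonneg ..) (h q')

theorem expectNext_mono (h : v ≤ w) : M.expectNext q a v ≤ M.expectNext q a w :=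
  Finset.sum_le_sum fun q' _ => mul_le_mul_of_nonneg_left (h q') (M.δ_nonneg ..)

theorem expectNext_const_mul (r : ℝ) :
    M.expectNext q a (fun q' => r * v q') = r * M.expectNext q a v := by
  simp only [expectNext, Finset.mul_sum, mul_left_comm]

theorem expectNext_sum {ι : Type} (s : Finset ι) (f : ι → Q → ℝ) :
    M.expectNext q a (fun q' => ∑ i ∈ s, f i q') = ∑ i ∈ s, M.expectNext q a (f i) := by
  simp only [expectNext, Finset.mul_sum]
  exact Finset.sum_comm

theorem eq_of_expectNext_eq (hv : v ≤ fun _ => c) (h : M.expectNext q a v = c) {q' : Q}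
    (hq' : 0 < M.δ q a q') : v q' = c := by
  have hzero : ∑ q'', M.δ q a q'' * (c - v q'') = 0 := by
    simp only [mul_sub, Finset.sum_sub_distrib, ← Finset.sum_mul, M.δ_sum, one_mul]
    exact sub_eq_zero.mpr h.symm
  have := (Finset.sum_eq_zero_iff_of_nonneg fun q'' _ =>
    mul_nonneg (M.δ_nonneg ..) (sub_nonneg.mpr (hv q''))).mp hzero q' (Finset.mem_univ _)
  linarith [(mul_eq_zero.mp this).resolve_left hq'.ne']

end ExpectNext

section Drift

variable (M : MDP Q A) (σ : List (Q × A) → Q → A → ℝ) (d0 : Q → ℝ)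

theorem expectAt_succ_le (hσ : IsStrategy σ) (hd0 : ∀ q, 0 ≤ d0 q) (i : ℕ) {f g : Q → ℝ}
    (h : ∀ q a, M.expectNext q a f ≤ g q) : M.expectAt σ d0 (i + 1) f ≤ M.expectAt σ d0 i g := by
  rw [expectAt_succ, expectAt]
  refine Finset.sum_le_sum fun qs _ => Finset.sum_le_sum fun as _ => ?_
  refine mul_le_mul_of_nonneg_left ?_ (M.pathProb_nonneg σ d0 hσ hd0 ..)
  calc ∑ a, σ (history qs as) (qs (Fin.last i)) a * M.expectNext (qs (Fin.last i)) a f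
      ≤ ∑ a, σ (history qs as) (qs (Fin.last i)) a * g (qs (Fin.last i)) :=
        Finset.sum_le_sum fun a _ => mul_le_mul_of_nonneg_left (h _ a) (hσ.1 ..)
    _ = g (qs (Fin.last i)) := by rw [← Finset.sum_mul, hσ.2, one_mul]

theorem expectAt_one (hσ : IsStrategy σ) (hd0 : IsDist d0) (i : ℕ) :
    M.expectAt σ d0 i 1 = 1 := by
  induction i with
  | zero => simpa [expectAt, pathProb, Fin.sum_univ_fun_snoc (n := 0), Fin.snoc] using hd0.2
  | succ i ih =>
    rw [expectAt_succ, ← ih, expectAt]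
    refine Finset.sum_congr rfl fun qs _ => Finset.sum_congr rfl fun as _ => ?_
    simp [M.δ_sum, hσ.2]

/-- The expectations of `g` telescope against those of `f`, so they are summable. -/
theorem tendsto_expectAt_of_drift (hσ : IsStrategy σ) (hd0 : ∀ q, 0 ≤ d0 q) {f g : Q → ℝ}
    (hf : 0 ≤ f) (hg : 0 ≤ g) (hdrift : ∀ q a, M.expectNext q a f + g q ≤ f q) :
    Tendsto (fun i => M.expectAt σ d0 i g) atTop (𝓝 0) := by
  set F := fun i => M.expectAt σ d0 i f
  have hstep : ∀ i, M.expectAt σ d0 i g ≤ F i - F (i + 1) := fun i => by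
    have := M.expectAt_succ_le σ d0 hσ hd0 i (g := f - g) fun q a => by
      simp only [Pi.sub_apply]; linarith [hdrift q a]
    rw [expectAt_sub] at this
    linarith
  refine (summable_of_sum_range_le (c := F 0) (fun i => M.expectAt_nonneg σ d0 hσ hd0 i hg)
    fun N => ?_).tendsto_atTop_zero
  calc ∑ i ∈ Finset.range N, M.expectAt σ d0 i g ≤ ∑ i ∈ Finset.range N, (F i - F (i + 1)) :=
        Finset.sum_le_sum fun i _ => hstep i
    _ = F 0 - F N := Finset.sum_range_sub' F N
    _ ≤ F 0 := sub_le_self _ (M.expectAt_nonneg σ d0 hσ hd0 N hf)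

end Drift

def actEdge (M : MDP Q A) (P : Q → A → Prop) (q q' : Q) : Prop := ∃ a, P q a ∧ 0 < M.δ q a q'

theorem isEC_setOf_reflTransGen (M : MDP Q A) (P : Q → A → Prop) (x : Q)
    (hP : ∀ q, ReflTransGen (M.actEdge P) x q → ∃ a, P q a)
    (hback : ∀ q, ReflTransGen (M.actEdge P) x q → ReflTransGen (M.actEdge P) q x) :
    M.IsEC {q | ReflTransGen (M.actEdge P) x q} := by
  set S := {q | ReflTransGen (M.actEdge P) x q}
  have hallowed : ∀ q ∈ S, ∀ a, P q a → M.Allowed S q a := fun q hq a ha q' hq' =>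
    hq.tail ⟨a, ha, hq'⟩
  have hlift : ∀ q ∈ S, ∀ q', ReflTransGen (M.actEdge P) q q' → ReflTransGen (M.ECEdge S) q q' := by
    intro q hq q' h
    induction h with
    | refl => exact .refl
    | tail hqw hw ih =>
      obtain ⟨a, ha, hpos⟩ := hw
      have hwS : _ ∈ S := hq.trans hqw
      exact ih.tail ⟨hwS, hwS.tail ⟨a, ha, hpos⟩, a, hallowed _ hwS a ha, hpos⟩
  exact ⟨fun q hq => (hP q hq).imp fun a ha => hallowed q hq a ha,
    fun q hq q' hq' => (hlift q hq x (hback q hq)).trans (hlift x .refl q' hq')⟩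

section Reach

variable (M : MDP Q A) [Nonempty A] (x : Q)

/-- The Bellman operator of the maximal probability of reaching `x`. -/
noncomputable def reachStep (v : Q → ℝ) : Q → ℝ := fun q =>
  if q = x then 1 else Finset.univ.sup' Finset.univ_nonempty fun a => M.expectNext q a v

noncomputable def reachIter (K : ℕ) : Q → ℝ := (M.reachStep x)^[K] 0

noncomputable def reachValue (q : Q) : ℝ := ⨆ K, M.reachIter x K q

def AttainsOne (q : Q) (a : A) : Prop := M.expectNext q a (M.reachValue x) = 1

variable {M x}

theorem reachIter_succ (K : ℕ) : M.reachIter x (K + 1) = M.reachStep x (M.reachIter x K) :=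
  Function.iterate_succ_apply' ..

theorem reachStep_mono : Monotone (M.reachStep x) := fun v w h q => by
  unfold reachStep
  split_ifs
  · rfl
  · exact Finset.sup'_mono_fun fun a _ => M.expectNext_mono h

theorem reachStep_le_iff {v : Q → ℝ} {q : Q} {c : ℝ} (hq : q ≠ x) :
    M.reachStep x v q ≤ c ↔ ∀ a, M.expectNext q a v ≤ c := by
  simp [reachStep, hq]

theorem reachIter_mem_Icc (K : ℕ) (q : Q) : M.reachIter x K q ∈ Set.Icc 0 1 := by
  induction K generalizing q with
  | zero => simp [reachIter]
  | succ K ih =>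
    rw [reachIter_succ]
    by_cases hq : q = x
    · simp [reachStep, hq]
    refine ⟨?_, (reachStep_le_iff hq).mpr fun a =>
      M.expectNext_le fun q' _ => (ih q').2⟩
    simp only [reachStep, hq, if_false]
    exact (M.expectNext_nonneg fun q' => (ih q').1).trans
      (Finset.le_sup' (fun a => M.expectNext q a _) (Finset.mem_univ (Classical.arbitrary A)))

theorem monotone_reachIter : Monotone (M.reachIter x) :=
  Monotone.monotone_iterate_of_le_map reachStep_mono fun q => (reachIter_mem_Icc 1 q).1

theorem bddAbove_reachIter (q : Q) : BddAbove (Set.range fun K => M.reachIter x K q) :=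
  ⟨1, by rintro _ ⟨K, rfl⟩; exact (reachIter_mem_Icc K q).2⟩

theorem reachIter_le_reachValue (K : ℕ) (q : Q) : M.reachIter x K q ≤ M.reachValue x q :=
  le_ciSup (bddAbove_reachIter q) K

theorem reachValue_nonneg : 0 ≤ M.reachValue x := fun q =>
  (reachIter_mem_Icc 0 q).1.trans (reachIter_le_reachValue 0 q)

theorem reachValue_le_one : M.reachValue x ≤ fun _ => 1 := fun _ =>
  ciSup_le fun K => (reachIter_mem_Icc K _).2

theorem reachValue_self : M.reachValue x x = 1 :=
  le_antisymm (reachValue_le_one x) <| by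
    simpa [reachIter_succ, reachStep] using reachIter_le_reachValue (M := M) (x := x) 1 x

theorem expectNext_reachValue_le {q : Q} (hq : q ≠ x) (a : A) :
    M.expectNext q a (M.reachValue x) ≤ M.reachValue x q := by
  have hlim : Tendsto (fun K => M.expectNext q a (M.reachIter x K)) atTop
      (𝓝 (M.expectNext q a (M.reachValue x))) :=
    tendsto_finsetSum _ fun q' _ => .const_mul _ <|
      tendsto_atTop_ciSup (fun _ _ h => monotone_reachIter h q') (bddAbove_reachIter q')
  refine le_of_tendsto' hlim fun K => ?_
  calc M.expectNext q a (M.reachIter x K) ≤ M.reachIter x (K + 1) q := by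
        rw [reachIter_succ]
        exact ((reachStep_le_iff hq).mp le_rfl) a
    _ ≤ M.reachValue x q := reachIter_le_reachValue _ q

theorem exists_expectNext_reachValue_eq_one {q : Q} (hq : q ≠ x) (h : M.reachValue x q = 1) :
    ∃ a, M.expectNext q a (M.reachValue x) = 1 := by
  have hle : M.reachValue x q ≤ M.reachStep x (M.reachValue x) q := ciSup_le fun K =>
    calc M.reachIter x K q ≤ M.reachIter x (K + 1) q := monotone_reachIter K.le_succ q
      _ ≤ M.reachStep x (M.reachValue x) q := by
        rw [reachIter_succ]
        exact reachStep_mono (fun q' => reachIter_le_reachValue K q') q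
  simp only [reachStep, hq, if_false, h, Finset.le_sup'_iff] at hle
  obtain ⟨a, -, ha⟩ := hle
  exact ⟨a, le_antisymm (M.expectNext_le fun q' _ => reachValue_le_one q') ha⟩

theorem reachValue_eq_one_of_reflTransGen {q q' : Q} (hq : M.reachValue x q = 1)
    (h : ReflTransGen (M.actEdge (M.AttainsOne x)) q q') : M.reachValue x q' = 1 := by
  induction h with
  | refl => exact hq
  | tail _ e _ =>
    obtain ⟨a, ha, hpos⟩ := e
    exact M.eq_of_expectNext_eq reachValue_le_one ha hpos

/-- If the states of value one that cannot reach `x` formed a nonempty set `G`, then every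
action from `G` either leaves value one (and is worth at most `β < 1`) or stays in `G`, so value
iteration would stay below `max β 0` on `G`. -/
theorem reflTransGen_of_reachValue_eq_one {q : Q} (hq : M.reachValue x q = 1) :
    ReflTransGen (M.actEdge (M.AttainsOne x)) q x := by
  by_contra hqx
  obtain ⟨β, hβ, hβle⟩ :=
    Finite.exists_lt_forall_le_of_lt (fun p : Q × A => M.expectNext p.1 p.2 (M.reachValue x)) 1
  have hG : ∀ K g, M.reachValue x g = 1 → ¬ ReflTransGen (M.actEdge (M.AttainsOne x)) g x →
      M.reachIter x K g ≤ max β 0 := by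
    intro K
    induction K with
    | zero => simp [reachIter]
    | succ K ih =>
      intro g hg1 hgx
      have hne : g ≠ x := by rintro rfl; exact hgx .refl
      rw [reachIter_succ, reachStep_le_iff hne]
      intro a
      by_cases ha : M.AttainsOne x g a
      · exact M.expectNext_le fun g' hg' => ih g' (M.eq_of_expectNext_eq reachValue_le_one ha hg')
          fun h => hgx (h.head ⟨a, ha, hg'⟩)
      · calc M.expectNext g a (M.reachIter x K) ≤ M.expectNext g a (M.reachValue x) :=
              M.expectNext_mono (reachIter_le_reachValue K)
          _ ≤ β := hβle (g, a) <| (M.expectNext_le fun q' _ => reachValue_le_one q').lt_of_ne ha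
          _ ≤ max β 0 := le_max_left _ _
  have : M.reachValue x q ≤ max β 0 := ciSup_le fun K => hG K q hq hqx
  linarith [max_lt hβ one_pos]

theorem mem_ECUnion_of_attainsOne {a : A} (ha : M.AttainsOne x x a) : x ∈ M.ECUnion := by
  refine ⟨_, M.isEC_setOf_reflTransGen (M.AttainsOne x) x (fun q hq => ?_) (fun q hq => ?_), .refl⟩
  · by_cases hqx : q = x
    · exact ⟨a, hqx ▸ ha⟩
    · exact exists_expectNext_reachValue_eq_one hqx
        (reachValue_eq_one_of_reflTransGen reachValue_self hq)
  · exact reflTransGen_of_reachValue_eq_one (reachValue_eq_one_of_reflTransGen reachValue_self hq)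

/-- The return probability to `x` is bounded away from one, so `reachValue x`, rescaled, drops by
one in expectation at each visit to `x`. -/
theorem exists_drift_potential_of_notMem_ECUnion (hx : x ∉ M.ECUnion) :
    ∃ f : Q → ℝ, 0 ≤ f ∧ ∀ q a, M.expectNext q a f + (Pi.single x 1 : Q → ℝ) q ≤ f q := by
  obtain ⟨β, hβ, hβle⟩ :=
    Finite.exists_lt_forall_le_of_lt (fun a => M.expectNext x a (M.reachValue x)) 1
  have hret : ∀ a, M.expectNext x a (M.reachValue x) ≤ β := fun a =>
    hβle a <| (M.expectNext_le fun q' _ => reachValue_le_one q').lt_of_ne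
      fun h => hx (mem_ECUnion_of_attainsOne h)
  have hc : 0 < (1 - β)⁻¹ := inv_pos.mpr (sub_pos.mpr hβ)
  refine ⟨fun q => (1 - β)⁻¹ * M.reachValue x q,
    fun q => mul_nonneg hc.le (reachValue_nonneg q), fun q a => ?_⟩
  rw [expectNext_const_mul]
  by_cases hq : q = x
  · subst hq
    have : (1 - β)⁻¹ * β + 1 = (1 - β)⁻¹ := by field_simp [(sub_pos.mpr hβ).ne']; ring
    simp only [Pi.single_eq_same, reachValue_self, mul_one]
    linarith [mul_le_mul_of_nonneg_left (hret a) hc.le]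
  · simpa [Pi.single_eq_of_ne hq] using
      mul_le_mul_of_nonneg_left (expectNext_reachValue_le hq a) hc.le

end Reach

theorem exists_drift_potential (M : MDP Q A) [Nonempty A] :
    ∃ f : Q → ℝ, 0 ≤ f ∧ ∀ q a, M.expectNext q a f + M.ECUnionᶜ.indicator 1 q ≤ f q := by
  choose! f hf0 hf using fun x (hx : x ∉ M.ECUnion) => exists_drift_potential_of_notMem_ECUnion hx
  refine ⟨fun q => ∑ x ∈ M.ECUnionᶜ.toFinset, f x q,
    fun q => Finset.sum_nonneg fun x hx => hf0 x (by simpa using hx) q, fun q a => ?_⟩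
  have hind : M.ECUnionᶜ.indicator 1 q = ∑ x ∈ M.ECUnionᶜ.toFinset, (Pi.single x 1 : Q → ℝ) q := by
    simp [Finset.sum_pi_single, Set.indicator_apply]
  rw [expectNext_sum, hind, ← Finset.sum_add_distrib]
  exact Finset.sum_le_sum fun x hx => hf x (by simpa using hx) q a

end MDP

open MDP in
/-- For every strategy, the probability mass in the union of all
end-components tends to `1`: `liminf_i M^σ_i(E) = 1`. -/
theorem stmt10 {Q A : Type} [Fintype Q] [Fintype A] (M : MDP Q A)
    (d0 : Q → ℝ) (hd0 : IsDist d0) (σ : List (Q × A) → Q → A → ℝ)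
    (hσ : IsStrategy σ) :
    Filter.liminf (fun i : ℕ => mass (M.stepDist σ d0 i) M.ECUnion)
      Filter.atTop = 1 := by
  obtain ⟨q₀, -⟩ := Finset.nonempty_of_sum_ne_zero (hd0.2.trans_ne one_ne_zero)
  obtain ⟨a₀, -⟩ := Finset.nonempty_of_sum_ne_zero ((hσ.2 [] q₀).trans_ne one_ne_zero)
  have : Nonempty A := ⟨a₀⟩
  obtain ⟨f, hf0, hf⟩ := M.exists_drift_potential
  have hout := M.tendsto_expectAt_of_drift σ d0 hσ hd0.1 hf0
    (g := M.ECUnionᶜ.indicator 1) (Set.indicator_nonneg fun _ _ => zero_le_one) hf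
  have hmass : ∀ i, mass (M.stepDist σ d0 i) M.ECUnion =
      1 - M.expectAt σ d0 i (M.ECUnionᶜ.indicator 1) := fun i => by
    rw [mass_stepDist, Set.indicator_compl, expectAt_sub, expectAt_one M σ d0 hσ hd0,
      sub_sub_cancel]
  simp only [hmass]
  rw [(tendsto_const_nhds.sub hout).liminf_eq, sub_zero]
end

section
/- In a finite MDP with n states, d0 is in the positive always-synchronizing winning region for T if and only if M^{σ_u}_i(T) > 0 for all i ≥ 0, where σ_u is the uniform strategy. -/
open scoped BigOperators
open Classical Filter

section Aux

open MDP

variable {Q A : Type} [Fintype Q] [Fintype A]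

lemma aux_uniform_isStrategy [Nonempty A] :
    IsStrategy (uniformStrategy Q A) := by
  constructor
  · intro h q a
    unfold uniformStrategy
    positivity
  · intro h q
    unfold uniformStrategy
    rw [Finset.sum_const, Finset.card_univ, nsmul_eq_mul]
    field_simp

lemma aux_pathProb_nonneg (M : MDP Q A) (σ : List (Q × A) → Q → A → ℝ)
    (hσ : ∀ h q a, 0 ≤ σ h q a) (d0 : Q → ℝ) (hd0 : ∀ q, 0 ≤ d0 q)
    (i : ℕ) (qs : Fin (i + 1) → Q) (as : Fin i → A) :
    0 ≤ M.pathProb σ d0 i qs as := by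
  unfold MDP.pathProb
  refine mul_nonneg (hd0 _) (Finset.prod_nonneg fun j _ => ?_)
  exact mul_nonneg (hσ _ _ _) (M.δ_nonneg _ _ _)

lemma aux_uniform_pathProb_pos [Nonempty A] (M : MDP Q A)
    (σ : List (Q × A) → Q → A → ℝ) (d0 : Q → ℝ) (hd0 : ∀ q, 0 ≤ d0 q)
    (i : ℕ) (qs : Fin (i + 1) → Q) (as : Fin i → A)
    (h : 0 < M.pathProb σ d0 i qs as) :
    0 < M.pathProb (uniformStrategy Q A) d0 i qs as := by
  have hne : M.pathProb σ d0 i qs as ≠ 0 := ne_of_gt h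
  unfold MDP.pathProb at hne ⊢
  have hd : d0 (qs 0) ≠ 0 := by
    intro h0; apply hne; rw [h0, zero_mul]
  have hδ : ∀ j : Fin i, M.δ (qs j.castSucc) (as j) (qs j.succ) ≠ 0 := by
    intro j h0
    apply hne
    rw [mul_eq_zero]
    right
    exact Finset.prod_eq_zero (Finset.mem_univ j) (by rw [h0, mul_zero])
  refine mul_pos (lt_of_le_of_ne (hd0 _) (Ne.symm hd))
    (Finset.prod_pos fun j _ => mul_pos ?_
      (lt_of_le_of_ne (M.δ_nonneg _ _ _) (Ne.symm (hδ j))))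
  unfold uniformStrategy
  have : (0 : ℝ) < (Fintype.card A : ℝ) := by
    exact_mod_cast Fintype.card_pos
  positivity

lemma aux_stepDist_nonneg (M : MDP Q A) (σ : List (Q × A) → Q → A → ℝ)
    (hσ : ∀ h q a, 0 ≤ σ h q a) (d0 : Q → ℝ) (hd0 : ∀ q, 0 ≤ d0 q)
    (i : ℕ) (q : Q) : 0 ≤ M.stepDist σ d0 i q := by
  unfold MDP.stepDist
  refine Finset.sum_nonneg fun qs _ => Finset.sum_nonneg fun as _ => ?_
  split
  · exact aux_pathProb_nonneg M σ hσ d0 hd0 i qs as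
  · exact le_refl 0

lemma aux_uniform_stepDist_pos [Nonempty A] (M : MDP Q A)
    (σ : List (Q × A) → Q → A → ℝ) (hσ : ∀ h q a, 0 ≤ σ h q a)
    (d0 : Q → ℝ) (hd0 : ∀ q, 0 ≤ d0 q) (i : ℕ) (q : Q)
    (h : 0 < M.stepDist σ d0 i q) :
    0 < M.stepDist (uniformStrategy Q A) d0 i q := by
  unfold MDP.stepDist at h
  have h1 : ∃ qs : Fin (i + 1) → Q, (0 : ℝ) <
      ∑ as : Fin i → A, if qs (Fin.last i) = q then M.pathProb σ d0 i qs as else 0 := by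
    by_contra hc
    push_neg at hc
    have := Finset.sum_nonpos (fun qs (_ : qs ∈ Finset.univ) => hc qs)
    linarith
  obtain ⟨qs, hqs⟩ := h1
  have h2 : ∃ as : Fin i → A, (0 : ℝ) <
      if qs (Fin.last i) = q then M.pathProb σ d0 i qs as else 0 := by
    by_contra hc
    push_neg at hc
    have := Finset.sum_nonpos (fun as (_ : as ∈ Finset.univ) => hc as)
    linarith
  obtain ⟨as, has⟩ := h2
  have hq : qs (Fin.last i) = q := by
    by_contra hx
    rw [if_neg hx] at has
    exact lt_irrefl _ has
  rw [if_pos hq] at has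
  unfold MDP.stepDist
  have hnn : ∀ qs' ∈ (Finset.univ : Finset (Fin (i+1) → Q)),
      (0:ℝ) ≤ ∑ as' : Fin i → A,
        if qs' (Fin.last i) = q then M.pathProb (uniformStrategy Q A) d0 i qs' as' else 0 := by
    intro qs' _
    refine Finset.sum_nonneg fun as' _ => ?_
    split
    · exact aux_pathProb_nonneg M _ (aux_uniform_isStrategy.1) d0 hd0 i qs' as'
    · exact le_refl 0
  refine Finset.sum_pos' hnn ⟨qs, Finset.mem_univ _, ?_⟩
  have hnn2 : ∀ as' ∈ (Finset.univ : Finset (Fin i → A)),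
      (0:ℝ) ≤ if qs (Fin.last i) = q then M.pathProb (uniformStrategy Q A) d0 i qs as' else 0 := by
    intro as' _
    rw [if_pos hq]
    exact aux_pathProb_nonneg M _ (aux_uniform_isStrategy.1) d0 hd0 i qs as'
  refine Finset.sum_pos' hnn2 ⟨as, Finset.mem_univ _, ?_⟩
  rw [if_pos hq]
  exact aux_uniform_pathProb_pos M σ d0 hd0 i qs as has

end Aux

open MDP in
/-- `d0` is positively always synchronizing in `T` iff the uniform strategy
keeps positive mass in `T` at every step. -/
theorem stmt12 {Q A : Type} [Fintype Q] [Fintype A] [Nonempty A] (M : MDP Q A)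
    (d0 : Q → ℝ) (hd0 : IsDist d0) (T : Set Q) :
    M.PosAlways d0 T ↔
      ∀ i : ℕ, 0 < mass (M.stepDist (uniformStrategy Q A) d0 i) T := by
  constructor
  · rintro ⟨σ, hσ, hpos⟩ i
    have hm := hpos i
    unfold mass at hm ⊢
    have h1 : ∃ q, (0:ℝ) < T.indicator (M.stepDist σ d0 i) q := by
      by_contra hc
      push_neg at hc
      have := Finset.sum_nonpos (fun q (_ : q ∈ Finset.univ) => hc q)
      linarith
    obtain ⟨q, hq⟩ := h1
    have hqT : q ∈ T := by
      by_contra hx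
      rw [Set.indicator_of_notMem hx] at hq
      exact lt_irrefl _ hq
    rw [Set.indicator_of_mem hqT] at hq
    have hu : 0 < M.stepDist (uniformStrategy Q A) d0 i q :=
      aux_uniform_stepDist_pos M σ hσ.1 d0 hd0.1 i q hq
    refine Finset.sum_pos' (fun q' _ => ?_) ⟨q, Finset.mem_univ _, ?_⟩
    · exact Set.indicator_nonneg
        (fun q'' _ => aux_stepDist_nonneg M _ aux_uniform_isStrategy.1 d0 hd0.1 i q'') q'
    · rw [Set.indicator_of_mem hqT]
      exact hu
  · intro h
    exact ⟨uniformStrategy Q A, aux_uniform_isStrategy, h⟩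
end

section
/- If a finite MDP with n states and initial distribution d0 is positively eventually synchronizing in T, then under the uniform strategy σ_u a probability mass of at least ε_e = α0·(α/|A|)^n is in T within n steps: there exists i ≤ n with M^{σ_u}_i(T) ≥ α0·(α/|A|)^n, where α is the smallest positive transition probability and α0 the smallest positive probability in d0. -/
open scoped BigOperators
open Classical Filter

namespace MDPAux

open MDP

variable {Q A : Type} [Fintype Q] [Fintype A]

/-- There is a path of positive transitions of length `i` from the support of
`d0` to `T`. -/
def Reach (M : MDP Q A) (d0 : Q → ℝ) (T : Set Q) (i : ℕ) : Prop :=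
  ∃ qs : Fin (i + 1) → Q, 0 < d0 (qs 0) ∧ qs (Fin.last i) ∈ T ∧
    ∀ j : Fin i, ∃ a, 0 < M.δ (qs j.castSucc) a (qs j.succ)

lemma reach_shorten {M : MDP Q A} {d0 : Q → ℝ} {T : Set Q} {i : ℕ}
    (hi : Fintype.card Q < i + 1) (h : Reach M d0 T i) :
    ∃ i' < i, Reach M d0 T i' := by
  obtain ⟨qs, h0, hT, hedge⟩ := h
  obtain ⟨x, y, hxy, hq⟩ := Fintype.exists_ne_map_eq_of_card_lt qs
    (by simpa using hi)
  have hjk : ∃ j k : Fin (i + 1), j.val < k.val ∧ qs j = qs k := by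
    rcases lt_or_gt_of_ne (show x.val ≠ y.val from fun hv => hxy (Fin.ext hv))
      with h' | h'
    · exact ⟨x, y, h', hq⟩
    · exact ⟨y, x, h', hq.symm⟩
  obtain ⟨j, k, hlt, hqjk⟩ := hjk
  have hk : k.val ≤ i := by have := k.isLt; omega
  set d := k.val - j.val with hd
  have hd1 : 1 ≤ d := by omega
  have hji : j.val ≤ i - d := by omega
  refine ⟨i - d, by omega, ?_⟩
  set qs' : Fin (i - d + 1) → Q := fun m =>
    if hm : m.val ≤ j.val then qs ⟨m.val, by omega⟩
    else qs ⟨m.val + d, by have := m.isLt; omega⟩ with hqs'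
  have hlow : ∀ m : Fin (i - d + 1), ∀ hm : m.val ≤ j.val,
      qs' m = qs ⟨m.val, by omega⟩ := by
    intro m hm
    simp only [hqs']
    rw [dif_pos hm]
  have hhigh : ∀ m : Fin (i - d + 1), j.val ≤ m.val →
      qs' m = qs ⟨m.val + d, by have := m.isLt; omega⟩ := by
    intro m hm
    rcases Nat.lt_or_ge j.val m.val with h' | h'
    · simp only [hqs']
      rw [dif_neg (by omega)]
    · have hmj : m.val = j.val := by omega
      simp only [hqs']
      rw [dif_pos (by omega)]
      have e1 : (⟨m.val, by omega⟩ : Fin (i + 1)) = j := Fin.ext hmj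
      have e2 : (⟨m.val + d, by have := m.isLt; omega⟩ : Fin (i + 1)) = k :=
        Fin.ext (show m.val + d = k.val by omega)
      rw [e1, e2]
      exact hqjk
  refine ⟨qs', ?_, ?_, ?_⟩
  · have e0 : qs' 0 = qs 0 := by
      rw [hlow 0 (by simp)]
      congr 1
    rw [e0]; exact h0
  · have el : qs' (Fin.last (i - d)) = qs ⟨(i - d) + d, by omega⟩ :=
      hhigh (Fin.last (i - d)) (by simp [Fin.last]; omega)
    rw [el]
    have : (⟨(i - d) + d, by omega⟩ : Fin (i + 1)) = Fin.last i :=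
      Fin.ext (by simp [Fin.last]; omega)
    rw [this]
    exact hT
  · intro j'
    have hj'lt : j'.val < i - d := j'.isLt
    rcases Nat.lt_or_ge j'.val j.val with hc | hc
    · -- both indices ≤ j
      have e1 : qs' j'.castSucc = qs ⟨j'.val, by omega⟩ :=
        hlow j'.castSucc (by simp; omega)
      have e2 : qs' j'.succ = qs ⟨j'.val + 1, by omega⟩ :=
        hlow j'.succ (by simp; omega)
      rw [e1, e2]
      obtain ⟨a, ha⟩ := hedge ⟨j'.val, by omega⟩
      rw [Fin.castSucc_mk, Fin.succ_mk] at ha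
      exact ⟨a, ha⟩
    · -- both indices shifted by d
      have e1 : qs' j'.castSucc = qs ⟨j'.val + d, by omega⟩ :=
        hhigh j'.castSucc (by simpa using hc)
      have e2 : qs' j'.succ = qs ⟨j'.val + 1 + d, by omega⟩ :=
        hhigh j'.succ (by simp; omega)
      rw [e1, e2]
      obtain ⟨a, ha⟩ := hedge ⟨j'.val + d, by omega⟩
      rw [Fin.castSucc_mk, Fin.succ_mk] at ha
      have e3 : (⟨j'.val + 1 + d, by omega⟩ : Fin (i + 1)) =
          ⟨j'.val + d + 1, by omega⟩ :=
          Fin.ext (show j'.val + 1 + d = j'.val + d + 1 by omega)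
      rw [e3]
      exact ⟨a, ha⟩

lemma reach_small {M : MDP Q A} {d0 : Q → ℝ} {T : Set Q} :
    ∀ i, Reach M d0 T i → ∃ i' ≤ Fintype.card Q, Reach M d0 T i' := by
  intro i
  induction i using Nat.strong_induction_on with
  | _ i ih =>
    intro h
    by_cases hc : i ≤ Fintype.card Q
    · exact ⟨i, hc, h⟩
    · obtain ⟨i', hi', h'⟩ := reach_shorten (by omega) h
      exact ih i' hi' h'

lemma pos_mass_reach {M : MDP Q A} {σ : List (Q × A) → Q → A → ℝ}
    {d0 : Q → ℝ} (hd0 : ∀ q, 0 ≤ d0 q) {T : Set Q} {i : ℕ}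
    (h : 0 < mass (M.stepDist σ d0 i) T) : Reach M d0 T i := by
  rw [MDP.mass] at h
  obtain ⟨q, -, hq⟩ := Finset.exists_lt_of_sum_lt (s := Finset.univ)
    (f := fun _ => (0 : ℝ)) (by simpa only [Finset.sum_const_zero] using h)
  have hqT : q ∈ T := by
    by_contra hn
    rw [Set.indicator_of_notMem hn] at hq
    exact lt_irrefl _ hq
  rw [Set.indicator_of_mem hqT, MDP.stepDist] at hq
  obtain ⟨qs, -, hqs⟩ := Finset.exists_lt_of_sum_lt (s := Finset.univ)
    (f := fun _ => (0 : ℝ)) (by simpa only [Finset.sum_const_zero] using hq)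
  obtain ⟨as, -, has⟩ := Finset.exists_lt_of_sum_lt (s := Finset.univ)
    (f := fun _ => (0 : ℝ)) (by simpa only [Finset.sum_const_zero] using hqs)
  by_cases hc : qs (Fin.last i) = q
  swap
  · rw [if_neg hc] at has; exact absurd has (lt_irrefl 0)
  rw [if_pos hc] at has
  refine ⟨qs, ?_, hc ▸ hqT, ?_⟩
  · rcases (hd0 (qs 0)).lt_or_eq with h' | h'
    · exact h'
    · rw [MDP.pathProb, ← h', zero_mul] at has
      exact absurd has (lt_irrefl 0)
  · intro j
    refine ⟨as j, ?_⟩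
    rcases (M.δ_nonneg (qs j.castSucc) (as j) (qs j.succ)).lt_or_eq with h' | h'
    · exact h'
    · exfalso
      have hz : M.pathProb σ d0 i qs as = 0 := by
        rw [MDP.pathProb, Finset.prod_eq_zero (Finset.mem_univ j)
          (by rw [← h', mul_zero]), mul_zero]
      rw [hz] at has
      exact lt_irrefl 0 has

lemma reach_mass [Nonempty A] {M : MDP Q A} {d0 : Q → ℝ} (hd0 : ∀ q, 0 ≤ d0 q)
    {T : Set Q} {i : ℕ} {α α0 : ℝ}
    (hα : IsLeast {x : ℝ | 0 < x ∧ ∃ q a q', M.δ q a q' = x} α)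
    (hα0 : IsLeast {x : ℝ | 0 < x ∧ ∃ q, d0 q = x} α0)
    (h : Reach M d0 T i) :
    α0 * (α / (Fintype.card A : ℝ)) ^ i ≤
      mass (M.stepDist (uniformStrategy Q A) d0 i) T := by
  obtain ⟨qs, h0, hT, hedge⟩ := h
  set as : Fin i → A := fun j => (hedge j).choose with has
  have ha : ∀ j : Fin i, 0 < M.δ (qs j.castSucc) (as j) (qs j.succ) :=
    fun j => (hedge j).choose_spec
  have hA : (0 : ℝ) < (Fintype.card A : ℝ) := by
    exact_mod_cast Fintype.card_pos
  have hαpos : 0 < α := hα.1.1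
  -- lower bound on the path probability
  have key : α0 * (α / (Fintype.card A : ℝ)) ^ i ≤
      M.pathProb (uniformStrategy Q A) d0 i qs as := by
    rw [MDP.pathProb]
    have hfac : ∀ j : Fin i, α / (Fintype.card A : ℝ) ≤
        (uniformStrategy Q A) (List.ofFn (fun k : Fin j.val =>
          (qs ⟨k.val, by have := k.isLt; have := j.isLt; omega⟩,
           as ⟨k.val, by have := k.isLt; have := j.isLt; omega⟩)))
          (qs j.castSucc) (as j) * M.δ (qs j.castSucc) (as j) (qs j.succ) := by
      intro j
      have hδ : α ≤ M.δ (qs j.castSucc) (as j) (qs j.succ) :=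
        hα.2 ⟨ha j, _, _, _, rfl⟩
      calc α / (Fintype.card A : ℝ)
          = 1 / (Fintype.card A : ℝ) * α := by ring
        _ ≤ 1 / (Fintype.card A : ℝ) * M.δ (qs j.castSucc) (as j) (qs j.succ) :=
          mul_le_mul_of_nonneg_left hδ (by positivity)
        _ = _ := by simp only [uniformStrategy]
    have hprod : (α / (Fintype.card A : ℝ)) ^ i ≤
        ∏ j : Fin i, ((uniformStrategy Q A) (List.ofFn (fun k : Fin j.val =>
          (qs ⟨k.val, by have := k.isLt; have := j.isLt; omega⟩,
           as ⟨k.val, by have := k.isLt; have := j.isLt; omega⟩)))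
          (qs j.castSucc) (as j) * M.δ (qs j.castSucc) (as j) (qs j.succ)) := by
      have e : (α / (Fintype.card A : ℝ)) ^ i =
          ∏ _j : Fin i, (α / (Fintype.card A : ℝ)) := by
        rw [Finset.prod_const, Finset.card_univ, Fintype.card_fin]
      rw [e]
      exact Finset.prod_le_prod (fun j _ => by positivity) (fun j _ => hfac j)
    exact mul_le_mul (hα0.2 ⟨h0, _, rfl⟩) hprod (by positivity) (hd0 _)
  -- nonnegativity facts
  have hpnn : ∀ (qs' : Fin (i + 1) → Q) (as' : Fin i → A),
      0 ≤ M.pathProb (uniformStrategy Q A) d0 i qs' as' := by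
    intro qs' as'
    exact mul_nonneg (hd0 _) (Finset.prod_nonneg fun j _ =>
      mul_nonneg (by simp only [uniformStrategy]; positivity) (M.δ_nonneg _ _ _))
  have hinn : ∀ (qs' : Fin (i + 1) → Q) (as' : Fin i → A) (q : Q),
      0 ≤ (if qs' (Fin.last i) = q then
        M.pathProb (uniformStrategy Q A) d0 i qs' as' else 0) := by
    intro qs' as' q
    by_cases hc : qs' (Fin.last i) = q
    · rw [if_pos hc]; exact hpnn qs' as'
    · rw [if_neg hc]
  have hstep_nn : ∀ q, 0 ≤ M.stepDist (uniformStrategy Q A) d0 i q := by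
    intro q
    exact Finset.sum_nonneg fun qs' _ => Finset.sum_nonneg fun as' _ =>
      hinn qs' as' q
  -- chain the bounds
  set q0 := qs (Fin.last i) with hq0
  have h1 : M.pathProb (uniformStrategy Q A) d0 i qs as ≤
      M.stepDist (uniformStrategy Q A) d0 i q0 := by
    rw [MDP.stepDist]
    have inner : M.pathProb (uniformStrategy Q A) d0 i qs as ≤
        ∑ as' : Fin i → A, (if qs (Fin.last i) = q0 then
          M.pathProb (uniformStrategy Q A) d0 i qs as' else 0) := by
      have := Finset.single_le_sum (f := fun as' : Fin i → A =>
        (if qs (Fin.last i) = q0 then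
          M.pathProb (uniformStrategy Q A) d0 i qs as' else 0))
        (fun as' _ => hinn qs as' q0) (Finset.mem_univ as)
      simpa only [if_pos (show qs (Fin.last i) = q0 from hq0.symm)] using this
    refine le_trans inner ?_
    exact Finset.single_le_sum (f := fun qs' : Fin (i + 1) → Q =>
      ∑ as' : Fin i → A, (if qs' (Fin.last i) = q0 then
        M.pathProb (uniformStrategy Q A) d0 i qs' as' else 0))
      (fun qs' _ => Finset.sum_nonneg fun as' _ => hinn qs' as' q0)
      (Finset.mem_univ qs)
  have h2 : M.stepDist (uniformStrategy Q A) d0 i q0 ≤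
      mass (M.stepDist (uniformStrategy Q A) d0 i) T := by
    rw [MDP.mass]
    have := Finset.single_le_sum
      (f := T.indicator (M.stepDist (uniformStrategy Q A) d0 i))
      (fun q _ => Set.indicator_nonneg (fun q _ => hstep_nn q) q)
      (Finset.mem_univ q0)
    rwa [Set.indicator_of_mem hT] at this
  linarith

end MDPAux

open MDP in
/-- If `d0` is positively eventually synchronizing in `T`, then under the
uniform strategy a probability mass of at least `α0 * (α/|A|)^n` is in `T`
within `n` steps. -/
theorem stmt18 {Q A : Type} [Fintype Q] [Fintype A] [Nonempty A] (M : MDP Q A)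
    (d0 : Q → ℝ) (hd0 : IsDist d0) (T : Set Q) (α α0 : ℝ)
    (hα : IsLeast {x : ℝ | 0 < x ∧ ∃ q a q', M.δ q a q' = x} α)
    (hα0 : IsLeast {x : ℝ | 0 < x ∧ ∃ q, d0 q = x} α0)
    (h : M.PosEvent d0 T) :
    ∃ i ≤ Fintype.card Q,
      α0 * (α / (Fintype.card A : ℝ)) ^ Fintype.card Q ≤
        mass (M.stepDist (uniformStrategy Q A) d0 i) T := by
  obtain ⟨σ, hσ, i, hmass⟩ := h
  have hreach := MDPAux.pos_mass_reach hd0.1 hmass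
  obtain ⟨i', hi', hr⟩ := MDPAux.reach_small i hreach
  refine ⟨i', hi', le_trans ?_ (MDPAux.reach_mass hd0.1 hα hα0 hr)⟩
  have hA : (0 : ℝ) < (Fintype.card A : ℝ) := by exact_mod_cast Fintype.card_pos
  have hA1 : (1 : ℝ) ≤ (Fintype.card A : ℝ) := by
    exact_mod_cast Fintype.card_pos
  have hα1 : α ≤ 1 := by
    obtain ⟨hpos, q, a, q', hδ⟩ := hα.1
    calc α = M.δ q a q' := hδ.symm
      _ ≤ ∑ q'', M.δ q a q'' :=
        Finset.single_le_sum (fun q'' _ => M.δ_nonneg q a q'') (Finset.mem_univ q')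
      _ = 1 := M.δ_sum q a
  have h0 : 0 ≤ α / (Fintype.card A : ℝ) := div_nonneg (le_of_lt hα.1.1) hA.le
  have h1 : α / (Fintype.card A : ℝ) ≤ 1 :=
    (div_le_one hA).mpr (le_trans hα1 hA1)
  exact mul_le_mul_of_nonneg_left (pow_le_pow_of_le_one h0 h1 hi')
    (le_of_lt hα0.1.1)
end

section
/- In a finite Markov chain (an MDP with a single action), d0 is boundedly weakly synchronizing in T if and only if some state of T ∩ E is reachable in the underlying directed graph from Supp(d0), where E is the union of recurrent classes; moreover in that case liminf over periods gives M_i(T) ≥ α0·α^{n+n²} for infinitely many i. -/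
open scoped BigOperators
open Classical Filter

/-!
Let `P` be the transition matrix, so that `M_i = d₀ P^i`, and call a set closed if no positive
transition leaves it. Positive entries of `P^ℓ` are at least `α^ℓ`, and a state reachable from
another one is reachable in fewer than `n` steps.

If no state of `T ∩ E` is reachable from `Supp(d₀)`, the mass of `T` is at most the mass outside
the closed set `E`. As `E` is reachable from every state, every `n` steps a fraction `α^n` of that
mass enters `E`, so it decays geometrically.

Conversely, let `q ∈ T ∩ S` be reachable, `S` an end-component. After fewer than `n` steps `S`
holds mass `α₀ α^(n-1)`, which it keeps forever since `S` is closed. At any later time some state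
of `S` holds a `1/n` share of it and reaches `q` in fewer than `n` steps, putting mass
`α₀ α^(2n-2) / n ≥ α₀ α^(n+n²)` on `q` when `α ≤ 1/2`. The only other case is `α = 1`, where the
mass at `q` returns undiminished along a cycle.
-/

open MDP Matrix Finset Relation

lemma exists_pos_and_pos_of_sum_mul_pos {Q : Type} [Fintype Q] {f g : Q → ℝ}
    (hf : ∀ x, 0 ≤ f x) (hg : ∀ x, 0 ≤ g x) (h : 0 < ∑ x, f x * g x) :
    ∃ x, 0 < f x ∧ 0 < g x := by
  obtain ⟨x, -, hx⟩ := (sum_pos_iff_of_nonneg fun x _ => mul_nonneg (hf x) (hg x)).1 h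
  exact ⟨x, (hf x).lt_of_ne fun h0 => by simp [← h0] at hx,
    (hg x).lt_of_ne fun h0 => by simp [← h0] at hx⟩

lemma natCast_mul_pow_le_one {α : ℝ} (hα0 : 0 ≤ α) (hα : α ≤ 1 / 2) (n : ℕ) :
    n * α ^ n ≤ 1 :=
  calc n * α ^ n ≤ 2 ^ n * (1 / 2) ^ n := by
        gcongr
        exact_mod_cast n.lt_two_pow_self.le
    _ = 1 := by rw [← mul_pow]; norm_num

lemma pow_add_sq_le_div_mul {α : ℝ} (hα0 : 0 ≤ α) (hα : α ≤ 1 / 2) {n : ℕ} (hn : 1 ≤ n) :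
    α ^ (n + n ^ 2) ≤ α ^ (n - 1) / n * α ^ (n - 1) := by
  have hexp : (n - 1) + (n - 1) + n ≤ n + n ^ 2 := by
    zify [hn]; nlinarith
  calc α ^ (n + n ^ 2) ≤ α ^ ((n - 1) + (n - 1) + n) :=
        pow_le_pow_of_le_one hα0 (by linarith) hexp
    _ = α ^ (n - 1) * α ^ (n - 1) * α ^ n := by rw [pow_add, pow_add]
    _ ≤ α ^ (n - 1) * α ^ (n - 1) * (1 / n) := by
        gcongr
        rw [le_div_iff₀ (by exact_mod_cast hn), mul_comm]
        exact natCast_mul_pow_le_one hα0 hα n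
    _ = α ^ (n - 1) / n * α ^ (n - 1) := by ring

/-- Starting from `x`, move to a reachable state `e` whose reachable set is smallest; that set
is then closed and strongly connected. -/
theorem exists_closed_stronglyConnected_reflTransGen {Q : Type} [Fintype Q] (r : Q → Q → Prop)
    (x : Q) : ∃ S : Set Q, (∀ ⦃a b⦄, a ∈ S → r a b → b ∈ S) ∧
      (∀ a ∈ S, ∀ b ∈ S, ReflTransGen r a b) ∧ ∃ e ∈ S, ReflTransGen r x e := by
  classical
  let reach (a : Q) : Finset Q := univ.filter (ReflTransGen r a)
  obtain ⟨e, hxe, hmin⟩ :=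
    (univ.filter (ReflTransGen r x)).exists_min_image (fun a => (reach a).card)
      ⟨x, by simp [ReflTransGen.refl]⟩
  simp only [mem_filter, mem_univ, true_and] at hxe hmin
  refine ⟨{b | ReflTransGen r e b}, fun a b ha hab => ha.tail hab, fun a ha b hb => ?_,
    e, .refl, hxe⟩
  have hsub : reach a ⊆ reach e := fun c hc => by
    simp only [reach, mem_filter, mem_univ, true_and] at hc ⊢
    exact ReflTransGen.trans ha hc
  have heq := eq_of_subset_of_card_le hsub (hmin a (hxe.trans ha))
  have hb' : b ∈ reach e := by simpa [reach] using hb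
  simpa [reach, ← heq] using hb'

namespace MDP

variable {Q : Type} [Fintype Q]

lemma mass_nonneg {v : Q → ℝ} (hv : ∀ x, 0 ≤ v x) (C : Set Q) : 0 ≤ mass v C :=
  sum_nonneg fun x _ => Set.indicator_nonneg (fun y _ => hv y) x

lemma le_mass {v : Q → ℝ} (hv : ∀ x, 0 ≤ v x) {C : Set Q} {x : Q} (hx : x ∈ C) :
    v x ≤ mass v C := by
  unfold mass
  simpa [Set.indicator_of_mem hx] using
    single_le_sum (f := C.indicator v) (fun y _ => Set.indicator_nonneg (fun y _ => hv y) y)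
      (mem_univ x)

lemma mass_add_mass_compl (v : Q → ℝ) (C : Set Q) : mass v C + mass v Cᶜ = ∑ x, v x := by
  simp only [mass, ← sum_add_distrib, Set.indicator_self_add_compl_apply]

lemma mass_vecMul (v : Q → ℝ) (A : Matrix Q Q ℝ) (C : Set Q) :
    mass (v ᵥ* A) C = ∑ x, v x * mass (A x) C := by
  simp only [mass, mul_sum]
  rw [sum_comm]
  refine sum_congr rfl fun y _ => ?_
  by_cases hy : y ∈ C <;> simp [hy, vecMul, dotProduct]

lemma mass_le_one_sub_mass {v : Q → ℝ} (hv : ∀ x, 0 ≤ v x) (hv1 : ∑ x, v x = 1)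
    {T E : Set Q} (hTE : ∀ y ∈ T, 0 < v y → y ∉ E) : mass v T ≤ 1 - mass v E := by
  rw [← hv1, ← mass_add_mass_compl v E, add_sub_cancel_left]
  refine sum_le_sum fun y _ => ?_
  by_cases hyT : y ∈ T
  · rcases (hv y).eq_or_lt with h0 | hpos
    · simp [Set.indicator_apply, ← h0]
    · simp [hyT, Set.indicator_of_mem (show y ∈ Eᶜ from hTE y hyT hpos)]
  · simp [hyT, Set.indicator_nonneg (fun y _ => hv y)]

lemma exists_mem_div_card_le_of_le_mass {v : Q → ℝ} {C : Set Q} {c : ℝ} (hc : 0 < c)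
    (h : c ≤ mass v C) : ∃ x ∈ C, c / Fintype.card Q ≤ v x := by
  have : Nonempty Q := by
    by_contra hQ
    rw [not_nonempty_iff] at hQ
    simp [mass] at h
    linarith
  have hsum : ∑ _x : Q, c / Fintype.card Q ≤ ∑ x, C.indicator v x := by
    rw [sum_const, card_univ, nsmul_eq_mul, mul_div_cancel₀ _ (by positivity)]
    exact h
  obtain ⟨x, -, hx⟩ := exists_le_of_sum_le univ_nonempty hsum
  have hxC : x ∈ C := by
    by_contra hxC
    rw [Set.indicator_of_notMem hxC] at hx
    exact hx.not_gt (by positivity)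
  exact ⟨x, hxC, by rwa [Set.indicator_of_mem hxC] at hx⟩

end MDP

namespace Matrix

variable {Q : Type}

def IsClosedUnder (P : Matrix Q Q ℝ) (C : Set Q) : Prop :=
  ∀ ⦃x y⦄, x ∈ C → 0 < P x y → y ∈ C

lemma IsClosedUnder.mem_of_reflTransGen {P : Matrix Q Q ℝ} {C : Set Q} (hC : P.IsClosedUnder C)
    {x y : Q} (hx : x ∈ C) (h : ReflTransGen (fun a b => 0 < P a b) x y) : y ∈ C := by
  induction h with
  | refl => exact hx
  | tail _ hyz ih => exact hC ih hyz

variable [Fintype Q]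

lemma mul_apply_le_mul_apply {A B : Matrix Q Q ℝ} (hA : ∀ i j, 0 ≤ A i j) (hB : ∀ i j, 0 ≤ B i j)
    (x z y : Q) : A x z * B z y ≤ (A * B) x y :=
  single_le_sum (f := fun w => A x w * B w y) (fun w _ => mul_nonneg (hA x w) (hB w y))
    (mem_univ z)

lemma mul_apply_le_vecMul_apply {v : Q → ℝ} {A : Matrix Q Q ℝ} (hv : ∀ i, 0 ≤ v i)
    (hA : ∀ i j, 0 ≤ A i j) (x y : Q) : v x * A x y ≤ (v ᵥ* A) y :=
  single_le_sum (f := fun w => v w * A w y) (fun w _ => mul_nonneg (hv w) (hA w y)) (mem_univ x)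

lemma sum_paths_eq_vecMul_pow [DecidableEq Q] (P : Matrix Q Q ℝ) (d : Q → ℝ) (i : ℕ) (q : Q) :
    ∑ qs : Fin (i + 1) → Q, (if qs (Fin.last i) = q then
      d (qs 0) * ∏ j : Fin i, P (qs j.castSucc) (qs j.succ) else 0) = (d ᵥ* P ^ i) q := by
  induction i generalizing d with
  | zero =>
    rw [← (Equiv.funUnique (Fin 1) Q).symm.sum_comp]
    simp
  | succ i ih =>
    rw [pow_succ', ← vecMul_vecMul, ← ih, ← (Fin.consEquiv fun _ => Q).sum_comp,
      Fintype.sum_prod_type, sum_comm]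
    refine sum_congr rfl fun qs _ => ?_
    have hlast : Fin.last (i + 1) = (Fin.last i).succ := rfl
    simp only [Fin.consEquiv_apply, hlast, Fin.cons_succ, Fin.cons_zero, Fin.prod_univ_succ,
      Fin.castSucc_zero, ← Fin.succ_castSucc]
    split_ifs
    · simp only [vecMul, dotProduct, sum_mul, mul_assoc]
    · simp

variable [DecidableEq Q] {P : Matrix Q Q ℝ}

lemma exists_pow_apply_pos_of_reflTransGen (hP : ∀ i j, 0 ≤ P i j) {x y : Q}
    (h : ReflTransGen (fun a b => 0 < P a b) x y) : ∃ k, 0 < (P ^ k) x y := by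
  induction h with
  | refl => exact ⟨0, by simp⟩
  | tail _ hyz ih =>
    obtain ⟨k, hk⟩ := ih
    refine ⟨k + 1, (mul_pos hk hyz).trans_le ?_⟩
    rw [pow_succ]
    exact mul_apply_le_mul_apply (pow_apply_nonneg hP k) hP _ _ _

lemma reflTransGen_of_pow_apply_pos (hP : ∀ i j, 0 ≤ P i j) {k : ℕ} {x y : Q}
    (h : 0 < (P ^ k) x y) : ReflTransGen (fun a b => 0 < P a b) x y := by
  induction k generalizing y with
  | zero =>
    obtain rfl : x = y := by by_contra hxy; simp [one_apply_ne hxy] at h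
    exact .refl
  | succ k ih =>
    rw [pow_succ, mul_apply] at h
    obtain ⟨z, hxz, hzy⟩ :=
      exists_pos_and_pos_of_sum_mul_pos (pow_apply_nonneg hP k x) (fun z => hP z y) h
    exact (ih hxz).tail hzy

/-- By Cayley–Hamilton, `P ^ k` is a linear combination of `P ^ 0, …, P ^ (card Q - 1)`. -/
lemma exists_lt_card_pow_apply_pos (hP : ∀ i j, 0 ≤ P i j) {k : ℕ} {x y : Q}
    (h : 0 < (P ^ k) x y) : ∃ ℓ < Fintype.card Q, 0 < (P ^ ℓ) x y := by
  by_contra! hzero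
  have : Nonempty Q := ⟨x⟩
  have hdeg : (Polynomial.X ^ k %ₘ P.charpoly).natDegree < Fintype.card Q := by
    refine P.charpoly_natDegree_eq_dim ▸ Polynomial.natDegree_modByMonic_lt _ P.charpoly_monic ?_
    intro h1
    have := P.charpoly_natDegree_eq_dim
    rw [h1, Polynomial.natDegree_one] at this
    exact Fintype.card_ne_zero this.symm
  rw [pow_eq_aeval_mod_charpoly, Polynomial.aeval_eq_sum_range' hdeg] at h
  simp only [sum_apply, smul_apply, smul_eq_mul] at h
  refine h.not_ge (sum_nonpos fun ℓ hℓ => ?_)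
  rw [le_antisymm (hzero ℓ (mem_range.1 hℓ)) (pow_apply_nonneg hP ℓ x y), mul_zero]

lemma pow_le_pow_apply_of_pos {α : ℝ} (hα0 : 0 ≤ α) (hP : ∀ i j, 0 ≤ P i j)
    (hα : ∀ i j, 0 < P i j → α ≤ P i j) {k : ℕ} {x y : Q} (h : 0 < (P ^ k) x y) :
    α ^ k ≤ (P ^ k) x y := by
  induction k generalizing y with
  | zero =>
    obtain rfl : x = y := by by_contra hxy; simp [one_apply_ne hxy] at h
    simp
  | succ k ih =>
    rw [pow_succ, mul_apply] at h
    obtain ⟨z, hxz, hzy⟩ :=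
      exists_pos_and_pos_of_sum_mul_pos (pow_apply_nonneg hP k x) (fun z => hP z y) h
    calc α ^ (k + 1) = α ^ k * α := pow_succ α k
      _ ≤ (P ^ k) x z * P z y := mul_le_mul (ih hxz) (hα z y hzy) hα0 (pow_apply_nonneg hP k x z)
      _ ≤ (P ^ (k + 1)) x y := by
        rw [pow_succ]; exact mul_apply_le_mul_apply (pow_apply_nonneg hP k) hP x z y

lemma exists_lt_card_pow_le_pow_apply {α : ℝ} (hα0 : 0 ≤ α) (hP : ∀ i j, 0 ≤ P i j)
    (hα : ∀ i j, 0 < P i j → α ≤ P i j) {x y : Q} (h : ReflTransGen (fun a b => 0 < P a b) x y) :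
    ∃ ℓ < Fintype.card Q, α ^ ℓ ≤ (P ^ ℓ) x y := by
  obtain ⟨k, hk⟩ := exists_pow_apply_pos_of_reflTransGen hP h
  obtain ⟨ℓ, hℓ, hpos⟩ := exists_lt_card_pow_apply_pos hP hk
  exact ⟨ℓ, hℓ, pow_le_pow_apply_of_pos hα0 hP hα hpos⟩

lemma IsClosedUnder.pow {C : Set Q} (hP : ∀ i j, 0 ≤ P i j) (hC : P.IsClosedUnder C) (k : ℕ) :
    (P ^ k).IsClosedUnder C :=
  fun _ _ hx h => hC.mem_of_reflTransGen hx (reflTransGen_of_pow_apply_pos hP h)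

/-- Unless the least positive entry is `1`, its row holds a second positive entry. -/
lemma eq_one_or_le_half (hP : P ∈ rowStochastic ℝ Q) {a b : Q}
    (hmin : ∀ i j, 0 < P i j → P a b ≤ P i j) : P a b = 1 ∨ P a b ≤ 1 / 2 := by
  refine or_iff_not_imp_left.2 fun hne => ?_
  obtain ⟨c, hcb, hc⟩ : ∃ c ≠ b, 0 < P a c := by
    by_contra! h
    have hrow := sum_row_of_mem_rowStochastic hP a
    rw [sum_eq_single b (fun c _ hcb => le_antisymm (h c hcb) (nonneg_of_mem_rowStochastic hP))
      (by simp)] at hrow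
    exact hne hrow
  have := add_le_sum (fun j _ => nonneg_of_mem_rowStochastic hP (i := a) (j := j))
    (mem_univ b) (mem_univ c) hcb.symm
  rw [sum_row_of_mem_rowStochastic hP a] at this
  linarith [hmin a c hc]

lemma sum_vecMul_pow (hP : P ∈ rowStochastic ℝ Q) {d : Q → ℝ} (hd1 : ∑ x, d x = 1) (i : ℕ) :
    ∑ x, (d ᵥ* P ^ i) x = 1 := by
  simpa [dotProduct_one] using
    vecMul_dotProduct_one_eq_one_rowStochastic (pow_mem hP i) (by simpa [dotProduct_one] using hd1)

lemma exists_pos_reflTransGen_of_vecMul_pow_pos (hP : ∀ i j, 0 ≤ P i j) {d : Q → ℝ}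
    (hd : ∀ x, 0 ≤ d x) {i : ℕ} {y : Q} (h : 0 < (d ᵥ* P ^ i) y) :
    ∃ x, 0 < d x ∧ ReflTransGen (fun a b => 0 < P a b) x y := by
  obtain ⟨x, hx, hxy⟩ :=
    exists_pos_and_pos_of_sum_mul_pos hd (fun x => pow_apply_nonneg hP i x y) h
  exact ⟨x, hx, reflTransGen_of_pow_apply_pos hP hxy⟩

lemma mass_row_eq_one (hP : P ∈ rowStochastic ℝ Q) {C : Set Q} (hC : P.IsClosedUnder C) {x : Q}
    (hx : x ∈ C) : mass (P x) C = 1 := by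
  rw [← sum_row_of_mem_rowStochastic hP x]
  refine sum_congr rfl fun y _ => ?_
  by_cases hy : y ∈ C
  · simp [hy]
  · rw [Set.indicator_of_notMem hy]
    exact le_antisymm (nonneg_of_mem_rowStochastic hP) (not_lt.1 fun h => hy (hC hx h))

lemma mass_add_mul_mass_compl_le (hP : P ∈ rowStochastic ℝ Q) {C : Set Q}
    (hC : P.IsClosedUnder C) {c : ℝ} (hc : ∀ x ∉ C, c ≤ mass (P x) C) {d : Q → ℝ}
    (hd : ∀ x, 0 ≤ d x) : mass d C + c * mass d Cᶜ ≤ mass (d ᵥ* P) C := by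
  rw [mass_vecMul, mass, mass, mul_sum, ← sum_add_distrib]
  refine sum_le_sum fun x _ => ?_
  by_cases hx : x ∈ C
  · simp [hx, mass_row_eq_one hP hC hx]
  · simpa [hx, mul_comm] using mul_le_mul_of_nonneg_left (hc x hx) (hd x)

lemma monotone_mass_vecMul_pow (hP : P ∈ rowStochastic ℝ Q) {C : Set Q} (hC : P.IsClosedUnder C)
    {d : Q → ℝ} (hd : ∀ x, 0 ≤ d x) : Monotone fun i => mass (d ᵥ* P ^ i) C := by
  refine monotone_nat_of_le_succ fun i => ?_
  have := mass_add_mul_mass_compl_le hP hC (c := 0)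
    (fun x _ => mass_nonneg (fun _ => nonneg_of_mem_rowStochastic hP) C)
    (nonneg_vecMul_of_mem_rowStochastic (pow_mem hP i) hd)
  simpa [pow_succ, ← vecMul_vecMul] using this

lemma pow_card_le_mass_pow_card_row (hP : P ∈ rowStochastic ℝ Q) {α : ℝ} (hα0 : 0 ≤ α)
    (hα1 : α ≤ 1) (hα : ∀ i j, 0 < P i j → α ≤ P i j) {C : Set Q} (hC : P.IsClosedUnder C)
    {x e : Q} (he : e ∈ C) (hxe : ReflTransGen (fun a b => 0 < P a b) x e) :
    α ^ Fintype.card Q ≤ mass ((P ^ Fintype.card Q) x) C := by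
  have hP0 : ∀ i j, 0 ≤ P i j := fun _ _ => nonneg_of_mem_rowStochastic hP
  obtain ⟨ℓ, hℓ, hxe⟩ := exists_lt_card_pow_le_pow_apply hα0 hP0 hα hxe
  have hrow : (P ^ Fintype.card Q) x = (P ^ ℓ) x ᵥ* P ^ (Fintype.card Q - ℓ) := by
    rw [← Nat.add_sub_cancel' hℓ.le, pow_add, Nat.add_sub_cancel_left]
    rfl
  calc α ^ Fintype.card Q ≤ α ^ ℓ := pow_le_pow_of_le_one hα0 hα1 hℓ.le
    _ ≤ (P ^ ℓ) x e := hxe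
    _ ≤ mass ((P ^ ℓ) x) C := le_mass (pow_apply_nonneg hP0 ℓ x) he
    _ ≤ mass ((P ^ Fintype.card Q) x) C := by
        simpa [hrow] using monotone_mass_vecMul_pow hP hC (pow_apply_nonneg hP0 ℓ x)
          (Nat.zero_le (Fintype.card Q - ℓ))

lemma one_sub_mass_vecMul_pow_mul_le (hP : P ∈ rowStochastic ℝ Q) {C : Set Q}
    (hC : P.IsClosedUnder C) {n : ℕ} {c : ℝ} (hc1 : c ≤ 1)
    (hc : ∀ x ∉ C, c ≤ mass ((P ^ n) x) C) {d : Q → ℝ} (hd : ∀ x, 0 ≤ d x)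
    (hd1 : ∑ x, d x = 1) (m : ℕ) : 1 - mass (d ᵥ* P ^ (m * n)) C ≤ (1 - c) ^ m := by
  induction m with
  | zero => simpa using mass_nonneg hd C
  | succ m ih =>
    set v := d ᵥ* P ^ (m * n)
    have hstep := mass_add_mul_mass_compl_le (pow_mem hP n)
      (hC.pow (fun _ _ => nonneg_of_mem_rowStochastic hP) n) hc
      (nonneg_vecMul_of_mem_rowStochastic (pow_mem hP (m * n)) hd)
    have hcompl : mass v Cᶜ = 1 - mass v C := by
      rw [eq_sub_iff_add_eq', mass_add_mass_compl, sum_vecMul_pow hP hd1]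
    rw [vecMul_vecMul, ← pow_add, ← Nat.succ_mul, hcompl] at hstep
    calc 1 - mass (d ᵥ* P ^ ((m + 1) * n)) C ≤ (1 - c) * (1 - mass v C) := by linarith
      _ ≤ (1 - c) ^ (m + 1) := by
        rw [pow_succ, mul_comm]; exact mul_le_mul_of_nonneg_right ih (by linarith)

lemma eventually_one_sub_mass_vecMul_pow_lt (hP : P ∈ rowStochastic ℝ Q) {α : ℝ} (hα0 : 0 < α)
    (hα1 : α ≤ 1) (hα : ∀ i j, 0 < P i j → α ≤ P i j) {C : Set Q} (hC : P.IsClosedUnder C)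
    (hreach : ∀ x, ∃ e ∈ C, ReflTransGen (fun a b => 0 < P a b) x e) {d : Q → ℝ}
    (hd : ∀ x, 0 ≤ d x) (hd1 : ∑ x, d x = 1) {ε : ℝ} (hε : 0 < ε) :
    ∀ᶠ i in atTop, 1 - mass (d ᵥ* P ^ i) C < ε := by
  set n := Fintype.card Q
  obtain ⟨m, hm⟩ := exists_pow_lt_of_lt_one hε (sub_lt_self 1 (pow_pos hα0 n))
  have hdecay := one_sub_mass_vecMul_pow_mul_le hP hC (pow_le_one₀ hα0.le hα1)
    (fun x _ => have ⟨_, he, hxe⟩ := hreach x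
      pow_card_le_mass_pow_card_row hP hα0.le hα1 hα hC he hxe) hd hd1 m
  refine eventually_atTop.2 ⟨m * n, fun i hi => ?_⟩
  have hmono := monotone_mass_vecMul_pow hP hC hd hi
  linarith

lemma finite_setOf_lt_mass_vecMul_pow (hP : P ∈ rowStochastic ℝ Q) {α : ℝ} (hα0 : 0 < α)
    (hα1 : α ≤ 1) (hα : ∀ i j, 0 < P i j → α ≤ P i j) {E : Set Q} (hE : P.IsClosedUnder E)
    (hreach : ∀ x, ∃ e ∈ E, ReflTransGen (fun a b => 0 < P a b) x e) {d : Q → ℝ}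
    (hd : ∀ x, 0 ≤ d x) (hd1 : ∑ x, d x = 1) {T : Set Q}
    (hT : ∀ x, 0 < d x → ∀ y ∈ T ∩ E, ¬ReflTransGen (fun a b => 0 < P a b) x y) {ε : ℝ}
    (hε : 0 < ε) : {i | ε < mass (d ᵥ* P ^ i) T}.Finite := by
  have hTE (i : ℕ) : ∀ y ∈ T, 0 < (d ᵥ* P ^ i) y → y ∉ E := fun y hyT hy hyE =>
    have ⟨x, hx, hxy⟩ :=
      exists_pos_reflTransGen_of_vecMul_pow_pos (fun _ _ => nonneg_of_mem_rowStochastic hP) hd hy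
    hT x hx y ⟨hyT, hyE⟩ hxy
  have hev : ∀ᶠ i in atTop, ¬ε < mass (d ᵥ* P ^ i) T :=
    (eventually_one_sub_mass_vecMul_pow_lt hP hα0 hα1 hα hE hreach hd hd1 hε).mono fun i hi =>
      not_lt.2 ((mass_le_one_sub_mass (nonneg_vecMul_of_mem_rowStochastic (pow_mem hP i) hd)
        (sum_vecMul_pow hP hd1 i) (hTE i)).trans hi.le)
  rw [← Nat.cofinite_eq_atTop, eventually_cofinite] at hev
  simpa using hev

lemma exists_pos_pow_apply_self_pos (hP : P ∈ rowStochastic ℝ Q) {S : Set Q}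
    (hS : P.IsClosedUnder S) (hconn : ∀ x ∈ S, ∀ y ∈ S, ReflTransGen (fun a b => 0 < P a b) x y)
    {q : Q} (hq : q ∈ S) : ∃ L, 0 < L ∧ 0 < (P ^ L) q q := by
  have hP0 : ∀ i j, 0 ≤ P i j := fun _ _ => nonneg_of_mem_rowStochastic hP
  obtain ⟨q1, hq1⟩ : ∃ q1, 0 < P q q1 := by
    by_contra! h
    linarith [sum_row_of_mem_rowStochastic hP q, sum_nonpos fun j (_ : j ∈ univ) => h j]
  obtain ⟨k, hk⟩ := exists_pow_apply_pos_of_reflTransGen hP0 (hconn q1 (hS hq hq1) q hq)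
  refine ⟨k + 1, k.succ_pos, (mul_pos hq1 hk).trans_le ?_⟩
  rw [pow_succ']
  exact mul_apply_le_mul_apply hP0 (pow_apply_nonneg hP0 k) q q1 q

lemma frequently_vecMul_pow_apply_le_of_one_le (hP : P ∈ rowStochastic ℝ Q)
    (hα : ∀ i j, 0 < P i j → 1 ≤ P i j) {q : Q} {L : ℕ} (hL : 0 < L) (hcyc : 0 < (P ^ L) q q)
    {d : Q → ℝ} (hd : ∀ x, 0 ≤ d x) (k : ℕ) :
    ∃ᶠ i in atTop, (d ᵥ* P ^ k) q ≤ (d ᵥ* P ^ i) q := by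
  have hP0 : ∀ i j, 0 ≤ P i j := fun _ _ => nonneg_of_mem_rowStochastic hP
  have hμ (i : ℕ) := nonneg_vecMul_of_mem_rowStochastic (pow_mem hP i) hd
  have hone : 1 ≤ (P ^ L) q q := by simpa using pow_le_pow_apply_of_pos zero_le_one hP0 hα hcyc
  have hret : ∀ m, (d ᵥ* P ^ k) q ≤ (d ᵥ* P ^ (k + m * L)) q := by
    intro m
    induction m with
    | zero => simp
    | succ m ih =>
      calc (d ᵥ* P ^ k) q ≤ (d ᵥ* P ^ (k + m * L)) q * (P ^ L) q q :=
            ih.trans (le_mul_of_one_le_right (hμ _ q) hone)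
        _ ≤ (d ᵥ* P ^ (k + (m + 1) * L)) q := by
          rw [Nat.succ_mul, ← add_assoc, pow_add P (k + m * L) L, ← vecMul_vecMul]
          exact mul_apply_le_vecMul_apply (hμ _) (pow_apply_nonneg hP0 L) q q
  exact frequently_atTop.2 fun N => ⟨k + N * L, by nlinarith, hret N⟩

lemma frequently_div_card_mul_pow_le_vecMul_pow_apply (hP : P ∈ rowStochastic ℝ Q) {α : ℝ}
    (hα0 : 0 ≤ α) (hα1 : α ≤ 1) (hα : ∀ i j, 0 < P i j → α ≤ P i j) {S : Set Q}
    (hS : P.IsClosedUnder S) (hconn : ∀ x ∈ S, ∀ y ∈ S, ReflTransGen (fun a b => 0 < P a b) x y)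
    {q : Q} (hq : q ∈ S) {d : Q → ℝ} (hd : ∀ x, 0 ≤ d x) {k : ℕ} {c : ℝ} (hc : 0 < c)
    (hk : c ≤ (d ᵥ* P ^ k) q) :
    ∃ᶠ i in atTop, c / Fintype.card Q * α ^ (Fintype.card Q - 1) ≤ (d ᵥ* P ^ i) q := by
  have hP0 : ∀ i j, 0 ≤ P i j := fun _ _ => nonneg_of_mem_rowStochastic hP
  have hμ (i : ℕ) := nonneg_vecMul_of_mem_rowStochastic (pow_mem hP i) hd
  refine frequently_atTop.2 fun N => ?_
  set i := max N k
  have hmassS : c ≤ mass (d ᵥ* P ^ i) S :=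
    hk.trans ((le_mass (hμ k) hq).trans (monotone_mass_vecMul_pow hP hS hd (le_max_right N k)))
  obtain ⟨x, hxS, hx⟩ := exists_mem_div_card_le_of_le_mass hc hmassS
  obtain ⟨ℓ, hℓ, hxq⟩ := exists_lt_card_pow_le_pow_apply hα0 hP0 hα (hconn x hxS q hq)
  refine ⟨i + ℓ, by omega, ?_⟩
  calc c / Fintype.card Q * α ^ (Fintype.card Q - 1) ≤ (d ᵥ* P ^ i) x * (P ^ ℓ) x q :=
        mul_le_mul hx ((pow_le_pow_of_le_one hα0 hα1 (by omega)).trans hxq) (by positivity)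
          (hμ i x)
    _ ≤ (d ᵥ* P ^ (i + ℓ)) q := by
        rw [pow_add, ← vecMul_vecMul]
        exact mul_apply_le_vecMul_apply (hμ i) (pow_apply_nonneg hP0 ℓ) x q

lemma frequently_le_vecMul_pow_apply (hP : P ∈ rowStochastic ℝ Q) {α : ℝ} (hα0 : 0 < α)
    (hα : ∀ i j, 0 < P i j → α ≤ P i j) (hα_cases : α = 1 ∨ α ≤ 1 / 2) {S : Set Q}
    (hS : P.IsClosedUnder S) (hconn : ∀ x ∈ S, ∀ y ∈ S, ReflTransGen (fun a b => 0 < P a b) x y)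
    {q₀ q : Q} (hq : q ∈ S) (hq₀q : ReflTransGen (fun a b => 0 < P a b) q₀ q) {d : Q → ℝ}
    (hd : ∀ x, 0 ≤ d x) {α₀ : ℝ} (hα₀ : 0 < α₀) (hα₀q₀ : α₀ ≤ d q₀) :
    ∃ᶠ i in atTop, α₀ * α ^ (Fintype.card Q + Fintype.card Q ^ 2) ≤ (d ᵥ* P ^ i) q := by
  set n := Fintype.card Q
  have hP0 : ∀ i j, 0 ≤ P i j := fun _ _ => nonneg_of_mem_rowStochastic hP
  have hα1 : α ≤ 1 := by rcases hα_cases with h | h <;> linarith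
  obtain ⟨k, hk, hkq⟩ := exists_lt_card_pow_le_pow_apply hα0.le hP0 hα hq₀q
  have hstart : α₀ * α ^ (n - 1) ≤ (d ᵥ* P ^ k) q :=
    calc α₀ * α ^ (n - 1) ≤ d q₀ * (P ^ k) q₀ q :=
          mul_le_mul hα₀q₀ ((pow_le_pow_of_le_one hα0.le hα1 (by omega)).trans hkq)
            (by positivity) (hd q₀)
      _ ≤ (d ᵥ* P ^ k) q := mul_apply_le_vecMul_apply hd (pow_apply_nonneg hP0 k) q₀ q
  rcases hα_cases with rfl | hα2
  · obtain ⟨L, hL, hcyc⟩ := exists_pos_pow_apply_self_pos hP hS hconn hq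
    refine (frequently_vecMul_pow_apply_le_of_one_le hP hα hL hcyc hd k).mono fun i hi => ?_
    simpa using hstart.trans hi
  · refine (frequently_div_card_mul_pow_le_vecMul_pow_apply hP hα0.le hα1 hα hS hconn hq hd
      (by positivity) hstart).mono fun i hi => le_trans ?_ hi
    calc α₀ * α ^ (n + n ^ 2) ≤ α₀ * (α ^ (n - 1) / n * α ^ (n - 1)) :=
          mul_le_mul_of_nonneg_left (pow_add_sq_le_div_mul hα0.le hα2 (by omega)) hα₀.le
      _ = α₀ * α ^ (n - 1) / n * α ^ (n - 1) := by ring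

end Matrix

namespace MDP

variable {Q : Type} [Fintype Q]

def transitionMatrix (M : MDP Q Unit) : Matrix Q Q ℝ := Matrix.of fun x y => M.δ x () y

variable (M : MDP Q Unit)

lemma transitionMatrix_mem_rowStochastic [DecidableEq Q] :
    M.transitionMatrix ∈ rowStochastic ℝ Q :=
  mem_rowStochastic_iff_sum.2 ⟨fun x y => M.δ_nonneg x () y, fun x => M.δ_sum x ()⟩

lemma stepDist_eq_vecMul_pow [DecidableEq Q] (d : Q → ℝ) (i : ℕ) :
    M.stepDist (fun _ _ _ => 1) d i = d ᵥ* M.transitionMatrix ^ i := by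
  ext q
  rw [← sum_paths_eq_vecMul_pow]
  simp [stepDist, pathProb, transitionMatrix]

lemma reflTransGen_ecEdge_of_reflTransGen {S : Set Q} (hS : M.transitionMatrix.IsClosedUnder S)
    {x y : Q} (hx : x ∈ S) (h : ReflTransGen (fun a b => 0 < M.transitionMatrix a b) x y) :
    ReflTransGen (M.ECEdge S) x y := by
  induction h with
  | refl => exact .refl
  | tail hxb hbc ih =>
    have hb := hS.mem_of_reflTransGen hx hxb
    exact ih.tail ⟨hb, hS hb hbc, (), fun z hz => hS hb hz, hbc⟩

lemma isEC_iff {S : Set Q} : M.IsEC S ↔ M.transitionMatrix.IsClosedUnder S ∧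
    ∀ x ∈ S, ∀ y ∈ S, ReflTransGen (fun a b => 0 < M.transitionMatrix a b) x y := by
  constructor
  · rintro ⟨hcl, hconn⟩
    refine ⟨fun x y hx hxy => ?_, fun x hx y hy => ReflTransGen.mono ?_ _ _ (hconn x hx y hy)⟩
    · obtain ⟨_, h⟩ := hcl x hx
      exact h y hxy
    · rintro a b ⟨-, -, _, -, hab⟩
      exact hab
  · rintro ⟨hcl, hconn⟩
    exact ⟨fun x hx => ⟨(), fun y hy => hcl hx hy⟩,
      fun x hx y hy => M.reflTransGen_ecEdge_of_reflTransGen hcl hx (hconn x hx y hy)⟩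

lemma isClosedUnder_ecUnion : M.transitionMatrix.IsClosedUnder M.ECUnion := by
  rintro x y ⟨S, hS, hx⟩ hxy
  exact ⟨S, hS, ((M.isEC_iff).1 hS).1 hx hxy⟩

lemma exists_mem_ecUnion_reflTransGen (x : Q) :
    ∃ e ∈ M.ECUnion, ReflTransGen (fun a b => 0 < M.transitionMatrix a b) x e := by
  obtain ⟨S, hcl, hconn, e, he, hxe⟩ :=
    exists_closed_stronglyConnected_reflTransGen (fun a b => 0 < M.transitionMatrix a b) x
  exact ⟨e, ⟨S, (M.isEC_iff).2 ⟨hcl, hconn⟩, he⟩, hxe⟩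

end MDP

open MDP in
/-- In a finite Markov chain (an MDP with a single action), `d0` is boundedly
weakly synchronizing in `T` iff some state of `T ∩ E` is reachable in the
underlying graph from `Supp(d0)`; moreover, in that case
`M_i(T) ≥ α0 * α^(n + n²)` for infinitely many `i`. -/
theorem stmt19 {Q : Type} [Fintype Q] (M : MDP Q Unit)
    (d0 : Q → ℝ) (hd0 : IsDist d0) (T : Set Q) (α α0 : ℝ)
    (hα : IsLeast {x : ℝ | 0 < x ∧ ∃ q a q', M.δ q a q' = x} α)
    (hα0 : IsLeast {x : ℝ | 0 < x ∧ ∃ q, d0 q = x} α0) :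
    ((∃ ε > (0 : ℝ),
        {i : ℕ | ε < mass (M.stepDist (fun _ _ _ => (1 : ℝ)) d0 i) T}.Infinite) ↔
      ∃ q0 ∈ supp d0, ∃ q ∈ T ∩ M.ECUnion,
        Relation.ReflTransGen (fun x y => 0 < M.δ x () y) q0 q) ∧
    ((∃ q0 ∈ supp d0, ∃ q ∈ T ∩ M.ECUnion,
        Relation.ReflTransGen (fun x y => 0 < M.δ x () y) q0 q) →
      {i : ℕ |
        α0 * α ^ (Fintype.card Q + Fintype.card Q ^ 2) ≤
          mass (M.stepDist (fun _ _ _ => (1 : ℝ)) d0 i) T}.Infinite) := by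
  set P := M.transitionMatrix
  have hP : P ∈ rowStochastic ℝ Q := M.transitionMatrix_mem_rowStochastic
  have hstep := M.stepDist_eq_vecMul_pow d0
  have hαP : ∀ i j, 0 < P i j → α ≤ P i j := fun i j h => hα.2 ⟨h, i, (), j, rfl⟩
  have hα_cases : α = 1 ∨ α ≤ 1 / 2 := by
    obtain ⟨⟨-, a, _, b, rfl⟩, -⟩ := hα
    exact eq_one_or_le_half hP hαP
  have hbound : (∃ q0 ∈ supp d0, ∃ q ∈ T ∩ M.ECUnion, ReflTransGen (fun x y => 0 < P x y) q0 q) →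
      {i | α0 * α ^ (Fintype.card Q + Fintype.card Q ^ 2) ≤ mass (d0 ᵥ* P ^ i) T}.Infinite := by
    rintro ⟨q0, hq0, q, ⟨hqT, S, hS, hqS⟩, hq0q⟩
    obtain ⟨hScl, hSconn⟩ := (M.isEC_iff).1 hS
    refine Nat.frequently_atTop_iff_infinite.1 ((frequently_le_vecMul_pow_apply hP hα.1.1 hαP
      hα_cases hScl hSconn hqS hq0q hd0.1 hα0.1.1 (hα0.2 ⟨hq0, q0, rfl⟩)).mono fun i hi => ?_)
    exact hi.trans (le_mass (nonneg_vecMul_of_mem_rowStochastic (pow_mem hP i) hd0.1) hqT)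
  simp only [hstep]
  refine ⟨⟨fun ⟨ε, hε, hinf⟩ => ?_, fun h => ?_⟩, hbound⟩
  · by_contra hno
    exact hinf (finite_setOf_lt_mass_vecMul_pow hP hα.1.1 (hα_cases.elim le_of_eq (·.trans
      (by norm_num))) hαP M.isClosedUnder_ecUnion M.exists_mem_ecUnion_reflTransGen hd0.1 hd0.2
      (fun x hx y hy hxy => hno ⟨x, hx, y, hy, hxy⟩) hε)
  · have hpos : 0 < α0 * α ^ (Fintype.card Q + Fintype.card Q ^ 2) :=
      mul_pos hα0.1.1 (pow_pos hα.1.1 _)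
    exact ⟨_, half_pos hpos, (hbound h).mono fun i hi => (half_lt_self hpos).trans_le hi⟩
end
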